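/- Let A be a circular convolution operator on ℓ²(ℤ_d×ℤ_d) with kernel a, let {Λ_k : k = 1,…,N_A} be the level sets of â, let Ω ⊂ ℤ_d×ℤ_d, and let Y = {e_{(j_1,j_2)}, A e_{(j_1,j_2)}, …, A^{l_{(j_1,j_2)}} e_{(j_1,j_2)} : (j_1,j_2) ∈ Ω}. If Y is a frame for ℓ²(ℤ_d×ℤ_d), then for each k the submatrix of F_d ⊗ F_d formed by the rows indexed by Λ_k and the columns indexed by Ω has rank |Λ_k|; consequently |Ω| ≥ max_k |Λ_k|. -/

import Mathlib

open Matrix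

/-- Unnormalized 2D discrete Fourier transform of `a : ℤ_d × ℤ_d → ℂ`. -/
noncomputable def hatKer2 (d : ℕ) [NeZero d] (a : ZMod d × ZMod d → ℂ) :
    ZMod d × ZMod d → ℂ :=
  fun j => ∑ k : ZMod d × ZMod d,
    a k * Complex.exp (-(2 * (Real.pi : ℂ) * Complex.I) *
      ((j.1.val : ℂ) * (k.1.val : ℂ) + (j.2.val : ℂ) * (k.2.val : ℂ)) / (d : ℂ))

/-- The 2D circular convolution operator with kernel `a`, as a matrix. -/
def convMat2 (d : ℕ) (a : ZMod d × ZMod d → ℂ) :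
    Matrix (ZMod d × ZMod d) (ZMod d × ZMod d) ℂ :=
  Matrix.of fun k i => a (k - i)

/-- The Kronecker product `F_d ⊗ F_d`: its entry at `((i₁,i₂),(j₁,j₂))` is
`(1/d) ω_d^{i₁j₁ + i₂j₂}`. -/
noncomputable def F2Mat (d : ℕ) : Matrix (ZMod d × ZMod d) (ZMod d × ZMod d) ℂ :=
  Matrix.of fun i j => ((d : ℂ))⁻¹ * Complex.exp (-(2 * (Real.pi : ℂ) * Complex.I) *
    ((i.1.val : ℂ) * (j.1.val : ℂ) + (i.2.val : ℂ) * (j.2.val : ℂ)) / (d : ℂ))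

/-!
The Fourier matrix `F = F_d ⊗ F_d` diagonalises every circular convolution:
`F A = diag(â) F`. Hence `F (A^n e_j)` is the `j`-th column of `F` scaled entrywise by `â^n`,
and on a level set `Λ` of `â`, where `â = c`, it is `c^n` times the `j`-th column of `F`
restricted to `Λ`. Since `F` is invertible, the images of the frame `Y` restricted to `Λ` span
`ℂ^Λ`, so the `Λ × Ω` submatrix of `F` has full row rank `|Λ|`, which is at most its number
`|Ω|` of columns.
-/

open scoped Kronecker

section Intertwining

variable {ι K : Type*} [Fintype ι] [DecidableEq ι]

theorem SemiconjBy.mulVec_pow_mulVec_single [CommSemiring K] {M A : Matrix ι ι K} {D : ι → K}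
    (h : SemiconjBy M A (diagonal D)) (n : ℕ) (i j : ι) :
    (M *ᵥ (A ^ n *ᵥ Pi.single j 1)) i = D i ^ n * M i j := by
  rw [mulVec_mulVec, (h.pow_right n).eq, diagonal_pow, ← mulVec_mulVec, mulVec_diagonal,
    mulVec_single_one]
  rfl

variable [Field K]

theorem span_col_submatrix_levelSet_eq_top {M A : Matrix ι ι K} {D : ι → K} (hM : IsUnit M)
    (hMA : SemiconjBy M A (diagonal D)) {Ω : Finset ι} {l : ι → ℕ}
    (hY : Submodule.span K {v | ∃ j ∈ Ω, ∃ n ≤ l j, v = A ^ n *ᵥ Pi.single j 1} = ⊤)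
    (c : K) :
    Submodule.span K (Set.range
      (M.submatrix (Subtype.val : {i // D i = c} → ι) (Subtype.val : Ω → ι)).col) = ⊤ := by
  let R : (ι → K) →ₗ[K] ({i // D i = c} → K) :=
    LinearMap.funLeft K K Subtype.val ∘ₗ M.mulVecLin
  have hR : Function.Surjective R :=
    (LinearMap.funLeft_surjective_of_injective K K _ Subtype.val_injective).comp
      (mulVec_surjective_iff_isUnit.mpr hM)
  rw [eq_top_iff, ← LinearMap.range_eq_top.mpr hR, LinearMap.range_eq_map, ← hY,
    Submodule.map_span, Submodule.span_le]
  rintro _ ⟨_, ⟨j, hj, n, -, rfl⟩, rfl⟩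
  have hRj : R (A ^ n *ᵥ Pi.single j 1) =
      c ^ n • (M.submatrix Subtype.val Subtype.val).col ⟨j, hj⟩ := by
    funext i
    change (M *ᵥ (A ^ n *ᵥ Pi.single j 1)) i = c ^ n * M i j
    rw [hMA.mulVec_pow_mulVec_single, i.2]
  rw [hRj]
  exact Submodule.smul_mem _ _ (Submodule.subset_span ⟨_, rfl⟩)

theorem rank_submatrix_levelSet_eq_card {M A : Matrix ι ι K} {D : ι → K} (hM : IsUnit M)
    (hMA : SemiconjBy M A (diagonal D)) {Ω : Finset ι} {l : ι → ℕ}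
    (hY : Submodule.span K {v | ∃ j ∈ Ω, ∃ n ≤ l j, v = A ^ n *ᵥ Pi.single j 1} = ⊤)
    (c : K) :
    (M.submatrix (Subtype.val : {i // D i = c} → ι) (Subtype.val : Ω → ι)).rank =
      Nat.card {i // D i = c} := by
  classical
  rw [rank_eq_finrank_span_cols, span_col_submatrix_levelSet_eq_top hM hMA hY c, finrank_top,
    Module.finrank_fintype_fun_eq_card, Nat.card_eq_fintype_card]

end Intertwining

theorem ZMod.val_finEquiv {d : ℕ} [NeZero d] (i : Fin d) : (ZMod.finEquiv d i).val = i := by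
  obtain ⟨n, rfl⟩ := Nat.exists_eq_succ_of_ne_zero (NeZero.ne d)
  rfl

theorem pow_zmod_val_add {M : Type*} [Monoid M] {d : ℕ} [NeZero d] {ξ : M} (h : ξ ^ d = 1)
    (x y : ZMod d) : ξ ^ (x + y).val = ξ ^ x.val * ξ ^ y.val := by
  rw [ZMod.val_add, ← pow_eq_pow_mod _ h, pow_add]

section Fourier

variable (d : ℕ)

noncomputable def dftRoot : ℂ := Complex.exp (-(2 * Real.pi * Complex.I) / d)

theorem isPrimitiveRoot_dftRoot [NeZero d] : IsPrimitiveRoot (dftRoot d) d := by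
  rw [dftRoot, neg_div, Complex.exp_neg]
  exact (Complex.isPrimitiveRoot_exp d (NeZero.ne d)).inv

noncomputable def dftMat : Matrix (ZMod d) (ZMod d) ℂ :=
  of fun i j => dftRoot d ^ (i.val * j.val)

theorem exp_eq_kronecker_dftMat (i j : ZMod d × ZMod d) :
    Complex.exp (-(2 * (Real.pi : ℂ) * Complex.I) *
      ((i.1.val : ℂ) * (j.1.val : ℂ) + (i.2.val : ℂ) * (j.2.val : ℂ)) / (d : ℂ)) =
      (dftMat d ⊗ₖ dftMat d) i j := by
  simp only [kroneckerMap_apply, dftMat, of_apply, dftRoot, ← Complex.exp_nat_mul,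
    ← Complex.exp_add]
  congr 1
  push_cast
  ring

theorem F2Mat_eq_smul_kronecker : F2Mat d = (d : ℂ)⁻¹ • (dftMat d ⊗ₖ dftMat d) := by
  ext i j
  rw [F2Mat, of_apply, exp_eq_kronecker_dftMat, Matrix.smul_apply, smul_eq_mul]

variable [NeZero d]

theorem dftMat_add_right (i m k : ZMod d) :
    dftMat d i (m + k) = dftMat d i m * dftMat d i k := by
  simp only [dftMat, of_apply, pow_mul]
  refine pow_zmod_val_add ?_ m k
  rw [← pow_mul, mul_comm, pow_mul, (isPrimitiveRoot_dftRoot d).pow_eq_one, one_pow]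

theorem det_dftMat_ne_zero : (dftMat d).det ≠ 0 := by
  let e : Fin d ≃ ZMod d := (ZMod.finEquiv d).toEquiv
  have hvdm : (dftMat d).submatrix e e = vandermonde fun i : Fin d => dftRoot d ^ (i : ℕ) := by
    ext i j
    simp [e, dftMat, ZMod.val_finEquiv, pow_mul]
  rw [← det_submatrix_equiv_self e, hvdm]
  exact det_vandermonde_ne_zero_iff.mpr fun i j h =>
    Fin.ext ((isPrimitiveRoot_dftRoot d).pow_inj i.isLt j.isLt h)

theorem kronecker_dftMat_add_right (i m k : ZMod d × ZMod d) :
    (dftMat d ⊗ₖ dftMat d) i (m + k) =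
      (dftMat d ⊗ₖ dftMat d) i m * (dftMat d ⊗ₖ dftMat d) i k := by
  simp only [kroneckerMap_apply, Prod.fst_add, Prod.snd_add, dftMat_add_right]
  ring

theorem isUnit_F2Mat : IsUnit (F2Mat d) := by
  rw [F2Mat_eq_smul_kronecker, isUnit_iff_isUnit_det, det_smul, det_kronecker,
    isUnit_iff_ne_zero]
  simp [NeZero.ne d, det_dftMat_ne_zero d]

theorem kronecker_dftMat_mul_convMat2 (a : ZMod d × ZMod d → ℂ) :
    (dftMat d ⊗ₖ dftMat d) * convMat2 d a =
      diagonal (hatKer2 d a) * (dftMat d ⊗ₖ dftMat d) := by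
  ext i k
  rw [diagonal_mul, mul_apply, hatKer2, Finset.sum_mul, ← Equiv.sum_comp (Equiv.addRight k)]
  refine Finset.sum_congr rfl fun m _ => ?_
  simp only [Equiv.coe_addRight, convMat2, of_apply, add_sub_cancel_right,
    kronecker_dftMat_add_right, exp_eq_kronecker_dftMat]
  ring

theorem F2Mat_semiconjBy_convMat2 (a : ZMod d × ZMod d → ℂ) :
    SemiconjBy (F2Mat d) (convMat2 d a) (diagonal (hatKer2 d a)) := by
  rw [SemiconjBy, F2Mat_eq_smul_kronecker, Matrix.smul_mul, Matrix.mul_smul,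
    kronecker_dftMat_mul_convMat2]

end Fourier

/-- if `Y = {A^n e_j : j ∈ Ω, n ≤ l j}` is a frame for `ℓ²(ℤ_d × ℤ_d)`,
then for each value `c` of `â` the submatrix of `F_d ⊗ F_d` with rows indexed by the
level set `Λ = {j : â j = c}` and columns indexed by `Ω` has rank `|Λ|`, and
consequently `|Ω| ≥ |Λ|` for every level set `Λ`. -/
theorem stmt12 (d : ℕ) [NeZero d] (a : ZMod d × ZMod d → ℂ)
    (Ω : Finset (ZMod d × ZMod d)) (l : ZMod d × ZMod d → ℕ)
    (hY : Submodule.span ℂ {v : ZMod d × ZMod d → ℂ | ∃ j ∈ Ω, ∃ n ≤ l j,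
        v = (convMat2 d a) ^ n *ᵥ (Pi.single j 1 : ZMod d × ZMod d → ℂ)} = ⊤) :
    ∀ c ∈ Set.range (hatKer2 d a),
      (Matrix.rank (Matrix.of
          fun (r : {j : ZMod d × ZMod d // hatKer2 d a j = c}) (q : ↥Ω) =>
            F2Mat d r.1 q.1)
        = Nat.card {j : ZMod d × ZMod d | hatKer2 d a j = c}) ∧
      Nat.card {j : ZMod d × ZMod d | hatKer2 d a j = c} ≤ Ω.card := by
  intro c _
  have hrank := rank_submatrix_levelSet_eq_card (isUnit_F2Mat d) (F2Mat_semiconjBy_convMat2 d a)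
    hY c
  refine ⟨hrank, ?_⟩
  calc Nat.card {j | hatKer2 d a j = c}
      = ((F2Mat d).submatrix (Subtype.val : {j // hatKer2 d a j = c} → _)
          (Subtype.val : Ω → _)).rank := hrank.symm
    _ ≤ Ω.card := (rank_le_card_width _).trans_eq (Fintype.card_coe Ω)
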